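/- arXiv:2107.14752 — 2 statements merged into one kernel-verified Lean document; each statement's English description precedes it below -/
import Mathlib

section
/- Let a, b, c be real numbers with c ≥ 0, a + b > 0 and (a+b)² > 4c². Set Δ = √((a+b)² − 4c²), w₁ = √((a+b)/(2Δ) + 1/2), w₂ = √((a+b)/(2Δ) − 1/2), ν₁ = (Δ + a − b)/2, ν₂ = (Δ + b − a)/2. Let Z = [[1,0],[0,−1]], and let S be the real 4×4 block matrix S = [[w₁·I₂, w₂·Z],[w₂·Z, w₁·I₂]]. Then S · diag(ν₁, ν₁, ν₂, ν₂) · Sᵀ = [[a·I₂, c·Z],[c·Z, b·I₂]]. -/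
open Matrix

/-- **Thermal (Williamson) decomposition** of a two-mode covariance matrix in
standard form: with `Δ = √((a+b)² − 4c²)`, `w₁ = √((a+b)/(2Δ) + 1/2)`,
`w₂ = √((a+b)/(2Δ) − 1/2)`, `ν₁ = (Δ + a − b)/2`, `ν₂ = (Δ + b − a)/2`,
`Z = [[1,0],[0,−1]]` and `S = [[w₁·I₂, w₂·Z],[w₂·Z, w₁·I₂]]` one has
`S · diag(ν₁, ν₁, ν₂, ν₂) · Sᵀ = [[a·I₂, c·Z],[c·Z, b·I₂]]`. -/
theorem thermal_decomposition_two_mode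
    (a b c : ℝ) (hc : 0 ≤ c) (hab : 0 < a + b) (h : 4 * c ^ 2 < (a + b) ^ 2)
    (Δ w₁ w₂ ν₁ ν₂ : ℝ)
    (hΔ : Δ = Real.sqrt ((a + b) ^ 2 - 4 * c ^ 2))
    (hw₁ : w₁ = Real.sqrt ((a + b) / (2 * Δ) + 1 / 2))
    (hw₂ : w₂ = Real.sqrt ((a + b) / (2 * Δ) - 1 / 2))
    (hν₁ : ν₁ = (Δ + a - b) / 2) (hν₂ : ν₂ = (Δ + b - a) / 2)
    (Z : Matrix (Fin 2) (Fin 2) ℝ) (hZ : Z = !![1, 0; 0, -1])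
    (S : Matrix (Fin 2 ⊕ Fin 2) (Fin 2 ⊕ Fin 2) ℝ)
    (hS : S = Matrix.fromBlocks (w₁ • 1) (w₂ • Z) (w₂ • Z) (w₁ • 1)) :
    S * Matrix.fromBlocks (ν₁ • 1) 0 0 (ν₂ • 1) * Sᵀ =
      Matrix.fromBlocks (a • 1) (c • Z) (c • Z) (b • 1) := by
  have hΔpos : 0 < Δ := by
    rw [hΔ]; exact Real.sqrt_pos.mpr (by linarith)
  have hΔsq : Δ ^ 2 = (a + b) ^ 2 - 4 * c ^ 2 := by
    rw [hΔ, Real.sq_sqrt (by linarith)]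
  have hΔle : Δ ≤ a + b := by
    nlinarith [hΔsq]
  have hx : (1:ℝ)/2 ≤ (a + b) / (2 * Δ) := by
    rw [div_le_div_iff₀ (by norm_num) (by linarith)]; linarith
  have hw1sq : w₁ ^ 2 = (a + b) / (2 * Δ) + 1 / 2 := by
    rw [hw₁, Real.sq_sqrt (by linarith)]
  have hw2sq : w₂ ^ 2 = (a + b) / (2 * Δ) - 1 / 2 := by
    rw [hw₂, Real.sq_sqrt (by linarith)]
  have hw1w2 : w₁ * w₂ = c / Δ := by
    rw [hw₁, hw₂, ← Real.sqrt_mul (by linarith)]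
    rw [show ((a + b) / (2 * Δ) + 1 / 2) * ((a + b) / (2 * Δ) - 1 / 2)
        = (c / Δ) ^ 2 by field_simp; nlinarith [hΔsq]]
    exact Real.sqrt_sq (div_nonneg hc hΔpos.le)
  have hA : w₁ ^ 2 * ν₁ + w₂ ^ 2 * ν₂ = a := by
    rw [hw1sq, hw2sq, hν₁, hν₂]; field_simp; ring
  have hD : w₂ ^ 2 * ν₁ + w₁ ^ 2 * ν₂ = b := by
    rw [hw1sq, hw2sq, hν₁, hν₂]; field_simp; ring
  have hB : w₁ * w₂ * ν₁ + w₂ * w₁ * ν₂ = c := by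
    rw [hw1w2, mul_comm w₂ w₁, hw1w2, hν₁, hν₂]; field_simp; ring
  have hZZ : Z * Z = 1 := by
    rw [hZ]
    ext i j
    fin_cases i <;> fin_cases j <;>
      simp [Matrix.mul_apply, Fin.sum_univ_two, Matrix.one_apply]
  have hZt : Zᵀ = Z := by
    rw [hZ]
    ext i j
    fin_cases i <;> fin_cases j <;> simp
  rw [hS, Matrix.fromBlocks_transpose, Matrix.fromBlocks_multiply,
      Matrix.fromBlocks_multiply]
  simp only [Matrix.transpose_smul, Matrix.transpose_one, hZt,
    Matrix.smul_mul, Matrix.mul_smul, Matrix.mul_zero, Matrix.zero_mul,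
    mul_one, one_mul, hZZ, add_zero, zero_add, smul_smul, smul_zero]
  simp only [← add_smul]
  rw [show w₁ * (ν₁ * w₁) + w₂ * (ν₂ * w₂) = a by rw [← hA]; ring,
      show w₂ * (ν₁ * w₁) + w₁ * (ν₂ * w₂) = c by rw [← hB]; ring,
      show w₁ * (ν₁ * w₂) + w₂ * (ν₂ * w₁) = c by rw [← hB]; ring,
      show w₂ * (ν₁ * w₂) + w₁ * (ν₂ * w₁) = b by rw [← hD]; ring]
end

section
/- Let a, b, c be real numbers with c ≥ 0, a + b > 0 and (a+b)² > 4c². Set Δ = √((a+b)² − 4c²), w₁ = √((a+b)/(2Δ) + 1/2), w₂ = √((a+b)/(2Δ) − 1/2), Z = [[1,0],[0,−1]], J = [[0,1],[−1,0]], and S = [[w₁·I₂, w₂·Z],[w₂·Z, w₁·I₂]] (a real 4×4 matrix). Then S is symplectic with respect to the form Ω = [[J, 0],[0, J]], i.e. S·Ω·Sᵀ = Ω. -/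
open Matrix

set_option maxHeartbeats 1000000 in
/-- The matrix `S = [[w₁·I₂, w₂·Z],[w₂·Z, w₁·I₂]]` realizing the thermal
decomposition of the standard-form covariance matrix is **symplectic** with
respect to the two-mode form `Ω = J ⊕ J`, where `J = [[0,1],[−1,0]]`:
`S · Ω · Sᵀ = Ω`. -/
theorem thermal_decomposition_symplectic
    (a b c : ℝ) (hc : 0 ≤ c) (hab : 0 < a + b) (h : 4 * c ^ 2 < (a + b) ^ 2)
    (Δ w₁ w₂ : ℝ)
    (hΔ : Δ = Real.sqrt ((a + b) ^ 2 - 4 * c ^ 2))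
    (hw₁ : w₁ = Real.sqrt ((a + b) / (2 * Δ) + 1 / 2))
    (hw₂ : w₂ = Real.sqrt ((a + b) / (2 * Δ) - 1 / 2))
    (Z J : Matrix (Fin 2) (Fin 2) ℝ)
    (hZ : Z = !![1, 0; 0, -1]) (hJ : J = !![0, 1; -1, 0])
    (S Ω : Matrix (Fin 2 ⊕ Fin 2) (Fin 2 ⊕ Fin 2) ℝ)
    (hS : S = Matrix.fromBlocks (w₁ • 1) (w₂ • Z) (w₂ • Z) (w₁ • 1))
    (hΩ : Ω = Matrix.fromBlocks J 0 0 J) :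
    S * Ω * Sᵀ = Ω := by
  have hΔpos : 0 < Δ := by
    rw [hΔ]; exact Real.sqrt_pos.mpr (by linarith)
  have hΔle : Δ ≤ a + b := by
    rw [hΔ]
    calc Real.sqrt ((a + b) ^ 2 - 4 * c ^ 2) ≤ Real.sqrt ((a + b) ^ 2) :=
          Real.sqrt_le_sqrt (by nlinarith)
      _ = a + b := Real.sqrt_sq hab.le
  have hq : (1:ℝ) / 2 ≤ (a + b) / (2 * Δ) := by
    rw [div_le_div_iff₀ (by norm_num) (by linarith)]; linarith
  have hw1sq : w₁ ^ 2 = (a + b) / (2 * Δ) + 1 / 2 := by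
    rw [hw₁, Real.sq_sqrt (by linarith)]
  have hw2sq : w₂ ^ 2 = (a + b) / (2 * Δ) - 1 / 2 := by
    rw [hw₂, Real.sq_sqrt (by linarith)]
  have key : w₁ ^ 2 - w₂ ^ 2 = 1 := by rw [hw1sq, hw2sq]; ring
  subst hZ hJ hS hΩ
  ext i j
  rcases i with i | i <;> rcases j with j | j <;> fin_cases i <;> fin_cases j <;>
    simp [Matrix.mul_apply, Fin.sum_univ_succ, Matrix.one_apply] <;> nlinarith [key]
end
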